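/- For fixed R > 0 and fixed U₀ > 0, the limit value U_∞(U₀, I₀, V₀) = -W(-R·U₀·e^{-R(U₀ + I₀ + (δ/p)V₀)})/R is strictly decreasing in I₀ and in V₀. -/

import Mathlib

/-!
The map `w ↦ w e^w` is strictly increasing on `[-1, ∞)`, so its inverse branch `W` is strictly
increasing on `[-e⁻¹, 0)`. As `s = U₀ + I₀ + (δ/p)V₀` grows, the argument `-R U₀ e^{-R s}` increases
and stays in `[-e⁻¹, 0)` because `s ≥ U₀` and `x e^{-x} ≤ e⁻¹`; hence `-W(…)/R` decreases.
-/

open Real Set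

lemma StrictMonoOn.strictMonoOn_of_rightInvOn {α β : Type*} [LinearOrder α] [Preorder β]
    {f : α → β} {g : β → α} {s : Set α} {t : Set β} (hf : StrictMonoOn f s)
    (hg : MapsTo g t s) (hgf : RightInvOn g f t) : StrictMonoOn g t := fun a ha b hb hab => by
  rwa [← hf.lt_iff_lt (hg ha) (hg hb), hgf ha, hgf hb]

lemma strictMonoOn_mul_exp : StrictMonoOn (fun w : ℝ => w * exp w) (Ici (-1)) := by
  apply strictMonoOn_of_deriv_pos (convex_Ici _) (by fun_prop)
  intro x hx
  rw [interior_Ici, mem_Ioi] at hx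
  have h : HasDerivAt (fun w : ℝ => w * exp w) ((1 + x) * exp x) x := by
    simpa [add_mul] using (hasDerivAt_id x).fun_mul (hasDerivAt_exp x)
  rw [h.deriv]
  exact mul_pos (by linarith) (exp_pos x)

lemma strictMonoOn_of_mul_exp_rightInvOn {W : ℝ → ℝ}
    (hW : ∀ y : ℝ, -exp (-1) ≤ y → y < 0 → -1 ≤ W y ∧ W y < 0 ∧ W y * exp (W y) = y) :
    StrictMonoOn W (Ico (-exp (-1)) 0) :=
  strictMonoOn_mul_exp.strictMonoOn_of_rightInvOn (fun y hy => (hW y hy.1 hy.2).1)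
    fun y hy => (hW y hy.1 hy.2).2.2

lemma mapsTo_neg_mul_exp_neg_mul {R U₀ : ℝ} (hR : 0 < R) (hU₀ : 0 < U₀) :
    MapsTo (fun s : ℝ => -(R * U₀ * exp (-(R * s)))) (Ici U₀) (Ico (-exp (-1)) 0) := by
  intro s (hs : U₀ ≤ s)
  have hpos : 0 < R * U₀ * exp (-(R * s)) := by positivity
  refine ⟨neg_le_neg ?_, neg_neg_iff_pos.mpr hpos⟩
  calc R * U₀ * exp (-(R * s)) ≤ R * s * exp (-(R * s)) := by gcongr
    _ ≤ exp (-1) := mul_exp_neg_le_exp_neg_one _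

lemma strictMonoOn_neg_mul_exp_neg_mul {R U₀ : ℝ} (hR : 0 < R) (hU₀ : 0 < U₀) :
    StrictMonoOn (fun s : ℝ => -(R * U₀ * exp (-(R * s)))) (Ici U₀) := by
  intro a _ b _ hab
  simp only [neg_lt_neg_iff]
  gcongr

lemma strictAntiOn_neg_W_neg_mul_exp_div {R U₀ : ℝ} (hR : 0 < R) (hU₀ : 0 < U₀) {W : ℝ → ℝ}
    (hW : ∀ y : ℝ, -exp (-1) ≤ y → y < 0 → -1 ≤ W y ∧ W y < 0 ∧ W y * exp (W y) = y) :
    StrictAntiOn (fun s : ℝ => -W (-(R * U₀ * exp (-(R * s)))) / R) (Ici U₀) := by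
  have hWmono := (strictMonoOn_of_mul_exp_rightInvOn hW).comp
    (strictMonoOn_neg_mul_exp_neg_mul hR hU₀) (mapsTo_neg_mul_exp_neg_mul hR hU₀)
  intro a ha b hb hab
  simpa [neg_div, div_lt_div_iff_of_pos_right hR] using hWmono ha hb hab

theorem stmt14_general (R δ p U₀ : ℝ) (hR : 0 < R) (hδ : 0 < δ) (hp : 0 < p)
    (hU₀ : 0 < U₀) (W : ℝ → ℝ)
    (hWrange : ∀ y : ℝ, -Real.exp (-1) ≤ y → y < 0 →
      -1 ≤ W y ∧ W y < 0 ∧ W y * Real.exp (W y) = y) :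
    (∀ V₀ : ℝ, 0 ≤ V₀ → StrictAntiOn
      (fun I₀ : ℝ =>
        -(W (-(R * U₀ * Real.exp (-(R * (U₀ + I₀ + (δ / p) * V₀)))))) / R)
      (Set.Ici 0)) ∧
    (∀ I₀ : ℝ, 0 ≤ I₀ → StrictAntiOn
      (fun V₀ : ℝ =>
        -(W (-(R * U₀ * Real.exp (-(R * (U₀ + I₀ + (δ / p) * V₀)))))) / R)
      (Set.Ici 0)) := by
  have hanti := strictAntiOn_neg_W_neg_mul_exp_div hR hU₀ hWrange
  have hδp : 0 < δ / p := div_pos hδ hp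
  constructor
  · intro V₀ hV₀
    refine hanti.comp_strictMonoOn (f := fun I₀ => U₀ + I₀ + δ / p * V₀)
      (fun _ _ _ _ h => by simpa using h) fun I₀ (hI₀ : 0 ≤ I₀) => ?_
    show U₀ ≤ _
    nlinarith
  · intro I₀ hI₀
    refine hanti.comp_strictMonoOn (f := fun V₀ => U₀ + I₀ + δ / p * V₀)
      (fun _ _ _ _ h => by simpa using mul_lt_mul_of_pos_left h hδp) fun V₀ (hV₀ : 0 ≤ V₀) => ?_
    show U₀ ≤ _
    nlinarith

/-- For fixed R > 0 and U₀ > 0, the limit value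
U_∞(U₀,I₀,V₀) = -W(-R·U₀·e^{-R(U₀+I₀+(δ/p)V₀)})/R is strictly decreasing in I₀
and in V₀. -/
theorem stmt14 (R δ p U₀ : ℝ) (hR : 0 < R) (hδ : 0 < δ) (hp : 0 < p)
    (hU₀ : 0 < U₀) (W : ℝ → ℝ)
    (hW : ∀ w : ℝ, -1 ≤ w → W (w * Real.exp w) = w)
    (hWrange : ∀ y : ℝ, -Real.exp (-1) ≤ y → y < 0 →
      -1 ≤ W y ∧ W y < 0 ∧ W y * Real.exp (W y) = y) :
    (∀ V₀ : ℝ, 0 ≤ V₀ → StrictAntiOn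
      (fun I₀ : ℝ =>
        -(W (-(R * U₀ * Real.exp (-(R * (U₀ + I₀ + (δ / p) * V₀)))))) / R)
      (Set.Ici 0)) ∧
    (∀ I₀ : ℝ, 0 ≤ I₀ → StrictAntiOn
      (fun V₀ : ℝ =>
        -(W (-(R * U₀ * Real.exp (-(R * (U₀ + I₀ + (δ / p) * V₀)))))) / R)
      (Set.Ici 0)) :=
  stmt14_general R δ p U₀ hR hδ hp hU₀ W hWrange
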